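/- Let f : ℝⁿ → ℝⁿ be C¹ with f(0) = 0, and let M(x) be a C¹ symmetric matrix function with M(x) ⪰ εI and R(x) = DfᵀM + MDf + Ṁ ⪯ −βM for all x, where ε, β > 0. Then V(x) = f(x)ᵀ M(x) f(x) satisfies V(x) > 0 for x with f(x) ≠ 0, and along trajectories of ẋ = f(x), V̇(x) ≤ −βV(x). -/

import Mathlib

open Matrix

/-!
Positivity of `V` is immediate from `M ⪰ εI`. For the decay estimate, differentiate
`V(x(t)) = f(x)ᵀ M(x) f(x)` by the product rule: since `ẋ = f(x)`, the chain rule gives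
`d/dt f(x) = Df · f(x)` and `d/dt M(x) = Ṁ(x)`, so `V̇ = fᵀ (Dfᵀ M + M Df + Ṁ) f = fᵀ R f`,
and `R ⪯ -βM` turns this into `V̇ ≤ -β fᵀ M f = -βV`.
-/

namespace Matrix

variable {m n R : Type*} [Fintype m] [Fintype n]

theorem dotProduct_mulVec_pos_of_coercive [CommRing R] [LinearOrder R] [IsStrictOrderedRing R]
    {A : Matrix n n R} {v : n → R} {ε : R} (hε : 0 < ε)
    (hA : ε * (v ⬝ᵥ v) ≤ v ⬝ᵥ (A *ᵥ v)) (hv : v ≠ 0) : 0 < v ⬝ᵥ (A *ᵥ v) := by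
  have hvv : 0 < v ⬝ᵥ v :=
    lt_of_le_of_ne (Finset.sum_nonneg fun i _ => mul_self_nonneg (v i))
      (Ne.symm (dotProduct_self_eq_zero.not.mpr hv))
  exact (mul_pos hε hvv).trans_le hA

theorem dotProduct_mulVec_transpose_mul_add_mul_add [CommSemiring R]
    (J A D : Matrix n n R) (v : n → R) :
    (J *ᵥ v) ⬝ᵥ (A *ᵥ v) + v ⬝ᵥ (D *ᵥ v + A *ᵥ (J *ᵥ v)) =
      v ⬝ᵥ ((Jᵀ * A + A * J + D) *ᵥ v) := by
  rw [add_mulVec, add_mulVec, ← mulVec_mulVec, ← mulVec_mulVec, dotProduct_add, dotProduct_add,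
    dotProduct_add, dotProduct_mulVec v Jᵀ, vecMul_transpose]
  ring

end Matrix

section Calculus

variable {m n : Type*} [Fintype n] {t : ℝ}

theorem HasDerivAt.dotProduct {u w : ℝ → n → ℝ} {u' w' : n → ℝ}
    (hu : HasDerivAt u u' t) (hw : HasDerivAt w w' t) :
    HasDerivAt (fun s => u s ⬝ᵥ w s) (u' ⬝ᵥ w t + u t ⬝ᵥ w') t := by
  simp only [_root_.dotProduct, ← Finset.sum_add_distrib]
  exact HasDerivAt.fun_sum fun i _ =>
    (hasDerivAt_pi.mp hu i).mul (hasDerivAt_pi.mp hw i)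

theorem HasDerivAt.mulVec {A : ℝ → Matrix m n ℝ} {A' : Matrix m n ℝ} {w : ℝ → n → ℝ}
    {w' : n → ℝ} (hA : ∀ i j, HasDerivAt (fun s => A s i j) (A' i j) t)
    (hw : HasDerivAt w w' t) :
    HasDerivAt (fun s => A s *ᵥ w s) (A' *ᵥ w t + A t *ᵥ w') t :=
  hasDerivAt_pi.mpr fun i => (hasDerivAt_pi.mpr (hA i)).dotProduct hw

end Calculus

theorem contraction_metric_gives_lyapunov_general {n : ℕ}
    (f : (Fin n → ℝ) → (Fin n → ℝ))
    (M : (Fin n → ℝ) → Matrix (Fin n) (Fin n) ℝ)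
    (hf : ContDiff ℝ 1 f)
    (hM : ∀ i j, ContDiff ℝ 1 fun z => M z i j)
    (ε β : ℝ) (hε : 0 < ε)
    (J Mdot R : (Fin n → ℝ) → Matrix (Fin n) (Fin n) ℝ)
    (hJ : ∀ z i j, J z i j = fderiv ℝ f z (Pi.single j 1) i)
    (hMdot : ∀ z i j, Mdot z i j = fderiv ℝ (fun w => M w i j) z (f z))
    (hR : ∀ z, R z = (J z).transpose * M z + M z * J z + Mdot z)
    (hMpos : ∀ (z v : Fin n → ℝ), ε * dotProduct v v ≤ dotProduct v ((M z).mulVec v))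
    (hRneg : ∀ (z v : Fin n → ℝ),
      dotProduct v ((R z).mulVec v) ≤ -β * dotProduct v ((M z).mulVec v))
    (V : (Fin n → ℝ) → ℝ)
    (hV : ∀ z, V z = dotProduct (f z) ((M z).mulVec (f z))) :
    (∀ z, f z ≠ 0 → 0 < V z) ∧
    (∀ x : ℝ → (Fin n → ℝ), (∀ t, HasDerivAt x (f (x t)) t) →
      ∀ t : ℝ, deriv (fun s => V (x s)) t ≤ -β * V (x t)) := by
  refine ⟨fun z hz => hV z ▸ dotProduct_mulVec_pos_of_coercive hε (hMpos z (f z)) hz, ?_⟩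
  intro x hx t
  set z := x t
  have hJz : J z = LinearMap.toMatrix' (fderiv ℝ f z : (Fin n → ℝ) →ₗ[ℝ] Fin n → ℝ) :=
    Matrix.ext fun i j => hJ z i j
  have hfx : HasDerivAt (fun s => f (x s)) (J z *ᵥ f z) t := by
    rw [hJz, LinearMap.toMatrix'_mulVec]
    exact ((hf.differentiable one_ne_zero z).hasFDerivAt).comp_hasDerivAt t (hx t)
  have hMx : ∀ i j, HasDerivAt (fun s => M (x s) i j) (Mdot z i j) t := fun i j => by
    rw [hMdot]
    exact (((hM i j).differentiable one_ne_zero z).hasFDerivAt).comp_hasDerivAt t (hx t)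
  have hVx : HasDerivAt (fun s => V (x s)) (f z ⬝ᵥ (R z *ᵥ f z)) t := by
    rw [hR, ← dotProduct_mulVec_transpose_mul_add_mul_add]
    simpa only [hV] using hfx.dotProduct (HasDerivAt.mulVec hMx hfx)
  rw [hVx.deriv, hV]
  exact hRneg z (f z)

/-- If `f(0) = 0`, `M(x) ⪰ εI`, and `R(x) = DfᵀM + MDf + Ṁ ⪯ -βM` for all `x`
(with `ε, β > 0`), then `V(x) = f(x)ᵀ M(x) f(x)` is positive wherever `f(x) ≠ 0`,
and along every trajectory of `ẋ = f(x)` its derivative satisfies `V̇ ≤ -βV`. -/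
theorem contraction_metric_gives_lyapunov {n : ℕ}
    (f : (Fin n → ℝ) → (Fin n → ℝ))
    (M : (Fin n → ℝ) → Matrix (Fin n) (Fin n) ℝ)
    (hf : ContDiff ℝ 1 f) (hf0 : f 0 = 0)
    (hM : ∀ i j, ContDiff ℝ 1 fun z => M z i j)
    (hMsymm : ∀ z, (M z).transpose = M z)
    (ε β : ℝ) (hε : 0 < ε) (hβ : 0 < β)
    (J Mdot R : (Fin n → ℝ) → Matrix (Fin n) (Fin n) ℝ)
    (hJ : ∀ z i j, J z i j = fderiv ℝ f z (Pi.single j 1) i)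
    (hMdot : ∀ z i j, Mdot z i j = fderiv ℝ (fun w => M w i j) z (f z))
    (hR : ∀ z, R z = (J z).transpose * M z + M z * J z + Mdot z)
    (hMpos : ∀ (z v : Fin n → ℝ), ε * dotProduct v v ≤ dotProduct v ((M z).mulVec v))
    (hRneg : ∀ (z v : Fin n → ℝ),
      dotProduct v ((R z).mulVec v) ≤ -β * dotProduct v ((M z).mulVec v))
    (V : (Fin n → ℝ) → ℝ)
    (hV : ∀ z, V z = dotProduct (f z) ((M z).mulVec (f z))) :
    (∀ z, f z ≠ 0 → 0 < V z) ∧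
    (∀ x : ℝ → (Fin n → ℝ), (∀ t, HasDerivAt x (f (x t)) t) →
      ∀ t : ℝ, deriv (fun s => V (x s)) t ≤ -β * V (x t)) :=
  contraction_metric_gives_lyapunov_general f M hf hM ε β hε J Mdot R hJ hMdot hR hMpos hRneg V hV
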